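/- (Proposition 1, swarm-level sufficient condition for local-to-global safety.) Suppose that for every robot i ∈ ι there is a real number s_i with s_i ≤ −2 ∫_A ρ_{𝒩(i)} · ρ̇_i dμ (a lower bound on robot i's achieved self safety rate ḣ_i^self), and that the swarm-level bound 2 ∑_{i∈ι} ∫_A ρ̇_i · ρ_{𝒩̄(i)} dμ ≤ β·( ε − ∫_A ρ² dμ ) + ∑_{i∈ι} s_i holds. Then the global CBF condition holds: −2 ∑_{i∈ι} ∫_A ρ · ρ̇_i dμ ≥ −β·( ε − ∫_A ρ² dμ ), i.e. ḣ ≥ −β·h. -/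

import Mathlib

/-!
Writing `ρ = ρ_{𝒩(i)} + ρ_{𝒩̄(i)}` inside the `i`-th integral splits `ḣ` into the sum of the self
rates `ḣᵢ^self = -2 ∫_A ρ_{𝒩(i)} ρ̇ᵢ` minus the cross term `2 ∑ᵢ ∫_A ρ̇ᵢ ρ_{𝒩̄(i)}`; the hypotheses
bound the first from below and the second from above, so `ḣ ≥ -β h` is linear arithmetic. The
square-integrability of the densities (Hölder with `2, 2, 1`) is what makes each integral split.
-/

open MeasureTheory Finset

lemma integral_sum_mul_eq_add_compl {Ω ι : Type*} [MeasurableSpace Ω] {μ : Measure Ω}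
    [Fintype ι] [DecidableEq ι] {f : ι → Ω → ℝ} {g : Ω → ℝ}
    (hf : ∀ j, MemLp (f j) 2 μ) (hg : MemLp g 2 μ) (s : Finset ι) :
    ∫ x, (∑ j, f j x) * g x ∂μ
      = ∫ x, (∑ j ∈ s, f j x) * g x ∂μ + ∫ x, g x * ∑ j ∈ sᶜ, f j x ∂μ := by
  have hs : Integrable (fun x => (∑ j ∈ s, f j x) * g x) μ :=
    (memLp_finsetSum s fun j _ => hf j).integrable_mul hg
  have hsc : Integrable (fun x => g x * ∑ j ∈ sᶜ, f j x) μ :=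
    hg.integrable_mul (memLp_finsetSum sᶜ fun j _ => hf j)
  rw [← integral_add hs hsc]
  refine integral_congr_ae (ae_of_all _ fun x => ?_)
  simp only [← sum_add_sum_compl s fun j => f j x]
  ring

theorem swarm_bound_implies_global_cbf_general
    {Ω : Type*} [MeasurableSpace Ω] (μ : Measure Ω) (A : Set Ω)
    {ι : Type*} [Fintype ι] [DecidableEq ι]
    (ρ ρdot : ι → Ω → ℝ)
    (hρ : ∀ i, MemLp (ρ i) 2 (μ.restrict A))
    (hρdot : ∀ i, MemLp (ρdot i) 2 (μ.restrict A))
    (𝒩 : ι → Finset ι)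
    (ε β : ℝ) (s : ι → ℝ)
    (hs : ∀ i, s i ≤ -2 * ∫ x in A, (∑ j ∈ 𝒩 i, ρ j x) * ρdot i x ∂μ)
    (hbound :
      2 * ∑ i, ∫ x in A, ρdot i x * (∑ j ∈ (𝒩 i)ᶜ, ρ j x) ∂μ
        ≤ β * (ε - ∫ x in A, (∑ j, ρ j x) ^ 2 ∂μ) + ∑ i, s i) :
    -2 * ∑ i, ∫ x in A, (∑ j, ρ j x) * ρdot i x ∂μ
      ≥ -β * (ε - ∫ x in A, (∑ j, ρ j x) ^ 2 ∂μ) := by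
  have hsplit : ∑ i, ∫ x in A, (∑ j, ρ j x) * ρdot i x ∂μ
      = ∑ i, ∫ x in A, (∑ j ∈ 𝒩 i, ρ j x) * ρdot i x ∂μ
        + ∑ i, ∫ x in A, ρdot i x * (∑ j ∈ (𝒩 i)ᶜ, ρ j x) ∂μ := by
    rw [← sum_add_distrib]
    exact sum_congr rfl fun i _ => integral_sum_mul_eq_add_compl hρ (hρdot i) (𝒩 i)
  have hself : ∑ i, s i ≤ -2 * ∑ i, ∫ x in A, (∑ j ∈ 𝒩 i, ρ j x) * ρdot i x ∂μ := by
    rw [mul_sum]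
    exact sum_le_sum fun i _ => hs i
  linarith

/-- Proposition 1 (swarm-level sufficient condition for local-to-global
safety): if every robot `i` admits a lower bound `s i` on its achieved self
safety rate `ḣᵢ^self`, and the swarm-level bound
`2∑ᵢ∫_A ρ̇ᵢ·ρ_{𝒩̄(i)} ≤ β(ε − ∫_A ρ²) + ∑ᵢ s i` holds, then the global CBF
condition `ḣ ≥ −β·h` holds. -/
theorem swarm_bound_implies_global_cbf
    {Ω : Type*} [MeasurableSpace Ω] (μ : Measure Ω) (A : Set Ω)
    (hA : MeasurableSet A)
    {ι : Type*} [Fintype ι] [DecidableEq ι] [Nonempty ι]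
    (ρ ρdot : ι → Ω → ℝ)
    (hρ : ∀ i, MemLp (ρ i) 2 (μ.restrict A))
    (hρdot : ∀ i, MemLp (ρdot i) 2 (μ.restrict A))
    (𝒩 : ι → Finset ι) (hself : ∀ i, i ∈ 𝒩 i)
    (ε β : ℝ) (hβ : 0 < β) (s : ι → ℝ)
    (hs : ∀ i, s i ≤ -2 * ∫ x in A, (∑ j ∈ 𝒩 i, ρ j x) * ρdot i x ∂μ)
    (hbound :
      2 * ∑ i, ∫ x in A, ρdot i x * (∑ j ∈ (𝒩 i)ᶜ, ρ j x) ∂μ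
        ≤ β * (ε - ∫ x in A, (∑ j, ρ j x) ^ 2 ∂μ) + ∑ i, s i) :
    -2 * ∑ i, ∫ x in A, (∑ j, ρ j x) * ρdot i x ∂μ
      ≥ -β * (ε - ∫ x in A, (∑ j, ρ j x) ^ 2 ∂μ) :=
  swarm_bound_implies_global_cbf_general μ A ρ ρdot hρ hρdot 𝒩 ε β s hs hbound
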